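/- Let c > 0 and let α : ℝ → ℝ be twice continuously differentiable. Define g : ℝ² → ℝ² by g(y) = (y₁ + 2 y₁² sgn(y₁) φ(y₁/c) α(y₂), y₂). Then g = S ∘ G ∘ τ (i.e., g(y) = S(G(τ(y))) for every y ∈ ℝ²), and g is continuously differentiable on ℝ². -/

import Mathlib

noncomputable section
open Topology Filter Set

/-- `φ(u) = (1 - u²)⁴` for `|u| ≤ 1` and `φ(u) = 0` for `|u| > 1`. -/
def phi (u : ℝ) : ℝ := if |u| ≤ 1 then (1 - u^2)^4 else 0

/-- The sign function: `1` for positive, `-1` for negative, `0` at `0`. -/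
def sgn (u : ℝ) : ℝ := if 0 < u then 1 else if u < 0 then -1 else 0

/-- The plane with the Euclidean norm. -/
abbrev E2 := EuclideanSpace ℝ (Fin 2)

/-- The vector `(a, b)` of `ℝ²`. -/
def vec2 (a b : ℝ) : E2 := (WithLp.equiv 2 (Fin 2 → ℝ)).symm ![a, b]

/-- `φ̃(x) = φ((x₁ - x₂)/(√2 c)) · α((x₁ + x₂)/2)`. -/
def phiT (c : ℝ) (α : ℝ → ℝ) (x : E2) : ℝ :=
  phi ((x 0 - x 1) / (Real.sqrt 2 * c)) * α ((x 0 + x 1) / 2)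

/-- `G(x) = x + (1/√2)(x₁ - x₂)² sgn(x₁ - x₂) φ̃(x) · (1, -1)`. -/
def Gmap (c : ℝ) (α : ℝ → ℝ) (x : E2) : E2 :=
  x + ((1 / Real.sqrt 2) * (x 0 - x 1)^2 * sgn (x 0 - x 1) * phiT c α x) • vec2 1 (-1)

/-- `τ(y) = (y₁/√2 + y₂, -y₁/√2 + y₂)`. -/
def tau (y : E2) : E2 := vec2 (y 0 / Real.sqrt 2 + y 1) (-(y 0) / Real.sqrt 2 + y 1)

/-- `S(x) = ((x₁ - x₂)/√2, (x₁ + x₂)/2)`, the inverse of `τ`. -/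
def Smap (x : E2) : E2 := vec2 ((x 0 - x 1) / Real.sqrt 2) ((x 0 + x 1) / 2)

/-- `g(y) = (y₁ + 2 y₁² sgn(y₁) φ(y₁/c) α(y₂), y₂)`. -/
def gmap (c : ℝ) (α : ℝ → ℝ) (y : E2) : E2 :=
  vec2 (y 0 + 2 * (y 0)^2 * sgn (y 0) * phi (y 0 / c) * α (y 1)) (y 1)

/-! ### Auxiliary lemmas -/

def phi' (v : ℝ) : ℝ := if |v| ≤ 1 then -8*v*(1 - v^2)^3 else 0

lemma phi_eq_max (v : ℝ) : phi v = (max (1 - v^2) 0)^4 := by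
  unfold phi
  rcases le_or_gt |v| 1 with h | h
  · rw [if_pos h, max_eq_left (by nlinarith [sq_abs v, abs_nonneg v])]
  · rw [if_neg (not_le.2 h), max_eq_right (by nlinarith [sq_abs v, abs_nonneg v])]
    norm_num

lemma phi'_eq_max (v : ℝ) : phi' v = -8*v*(max (1 - v^2) 0)^3 := by
  unfold phi'
  rcases le_or_gt |v| 1 with h | h
  · rw [if_pos h, max_eq_left (by nlinarith [sq_abs v, abs_nonneg v])]
  · rw [if_neg (not_le.2 h), max_eq_right (by nlinarith [sq_abs v, abs_nonneg v])]
    ring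

lemma continuous_phi : Continuous phi := by
  simp only [funext phi_eq_max]; fun_prop

lemma continuous_phi' : Continuous phi' := by
  simp only [funext phi'_eq_max]; fun_prop

lemma phi_nonneg (v : ℝ) : 0 ≤ phi v := by
  unfold phi; split <;> positivity

lemma phi_le_one (v : ℝ) : phi v ≤ 1 := by
  unfold phi; split
  · next h => exact pow_le_one₀ (by nlinarith [sq_abs v, abs_nonneg v]) (by nlinarith [sq_nonneg v])
  · norm_num

lemma phi_le (v : ℝ) : phi v ≤ (1 - v^2)^4 := by
  unfold phi; split
  · exact le_rfl
  · positivity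

lemma phi_zero_of_gt (v : ℝ) (h : 1 < |v|) : phi v = 0 := if_neg (not_le.2 h)
lemma phi'_zero_of_gt (v : ℝ) (h : 1 < |v|) : phi' v = 0 := if_neg (not_le.2 h)

lemma sgn_smul (a u : ℝ) (ha : 0 < a) : sgn (a * u) = sgn u := by
  unfold sgn
  rcases lt_trichotomy 0 u with h | h | h
  · rw [if_pos h, if_pos (mul_pos ha h)]
  · simp [← h]
  · rw [if_neg (not_lt.2 h.le), if_pos h,
      if_neg (not_lt.2 (mul_nonpos_of_nonneg_of_nonpos ha.le h.le)),
      if_pos (mul_neg_of_pos_of_neg ha h)]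

lemma sq_sgn (u : ℝ) : u^2 * sgn u = u * |u| := by
  unfold sgn
  rcases lt_trichotomy 0 u with h | h | h
  · rw [if_pos h, abs_of_pos h]; ring
  · simp [← h]
  · rw [if_neg (not_lt.2 h.le), if_pos h, abs_of_neg h]; ring

/-! ### The 1D function `h(u) = u|u|φ(u/c)` and its derivative -/

def hfun (c : ℝ) (u : ℝ) : ℝ := u * |u| * phi (u / c)

def hder (c : ℝ) (u : ℝ) : ℝ := 2 * |u| * phi (u / c) + u * |u| * phi' (u / c) / c

lemma hasDerivAt_zero_aux (f M : ℝ → ℝ) (u₀ : ℝ) (hf0 : f u₀ = 0)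
    (hM : ContinuousAt M u₀) (hM0 : M u₀ = 0)
    (hb : ∀ u, |f u| ≤ M u * |u - u₀|) : HasDerivAt f 0 u₀ := by
  rw [hasDerivAt_iff_isLittleO]
  simp only [hf0, smul_zero, sub_zero]
  rw [Asymptotics.isLittleO_iff]
  intro ε hε
  have hev : ∀ᶠ u in 𝓝 u₀, M u < ε := by
    have : M u₀ < ε := by simpa [hM0] using hε
    exact hM.eventually_lt continuousAt_const this
  filter_upwards [hev] with u hu
  calc ‖f u‖ = |f u| := rfl
    _ ≤ M u * |u - u₀| := hb u
    _ ≤ ε * |u - u₀| := mul_le_mul_of_nonneg_right hu.le (abs_nonneg _)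
    _ = ε * ‖u - u₀‖ := rfl

lemma hfun_abs_le (c : ℝ) (u : ℝ) : |hfun c u| ≤ u^2 * (1 - (u/c)^2)^4 := by
  have h1 : |hfun c u| = u^2 * phi (u / c) := by
    rw [hfun, abs_mul, abs_mul, abs_abs, abs_of_nonneg (phi_nonneg _), ← sq_abs u, sq]
  rw [h1]
  exact mul_le_mul_of_nonneg_left (phi_le _) (sq_nonneg _)

lemma hder_boundary (c : ℝ) (hc : 0 < c) (u : ℝ) (hu : |u| = c) : hder c u = 0 := by
  have h1 : |u / c| = 1 := by rw [abs_div, hu, abs_of_pos hc, div_self hc.ne']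
  have h2 : (u/c)^2 = 1 := by rw [← sq_abs, h1]; norm_num
  have hphi : phi (u / c) = 0 := by rw [phi, if_pos h1.le, h2]; norm_num
  have hphi' : phi' (u / c) = 0 := by rw [phi', if_pos h1.le, h2]; ring
  rw [hder, hphi, hphi']; ring

lemma hasDerivAt_hfun (c : ℝ) (hc : 0 < c) (u : ℝ) :
    HasDerivAt (hfun c) (hder c u) u := by
  rcases lt_trichotomy |u| c with hlt | heq | hgt
  · -- |u| < c
    rcases lt_trichotomy 0 u with hpos | hzero | hneg
    · -- 0 < u < c : hfun = u² (1-(u/c)²)⁴ near u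
      have h1 : HasDerivAt (fun v : ℝ => v / c) (1/c) u := (hasDerivAt_id u).div_const c
      have h3 : HasDerivAt (fun v : ℝ => 1 - (v/c)^2) (-(2 * (u/c)^1 * (1/c))) u :=
        (h1.pow 2).const_sub 1
      have h4 := h3.pow 4
      have h5 : HasDerivAt (fun v : ℝ => v^2) (2*u) u := by
        simpa using hasDerivAt_pow 2 u
      have h6 := h5.mul h4
      have hopen : IsOpen (Set.Ioo (0:ℝ) c) := isOpen_Ioo
      have hmem : u ∈ Set.Ioo (0:ℝ) c := ⟨hpos, by rwa [abs_of_pos hpos] at hlt⟩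
      have heq : ∀ᶠ v in 𝓝 u, hfun c v = v^2 * (1 - (v/c)^2)^4 := by
        filter_upwards [hopen.mem_nhds hmem] with v hv
        have h7 : |v / c| ≤ 1 := by
          rw [abs_div, abs_of_pos hc, div_le_one hc, abs_of_pos hv.1]; exact hv.2.le
        rw [hfun, phi, if_pos h7, abs_of_pos hv.1]; ring
      have := h6.congr_of_eventuallyEq heq
      refine this.congr_deriv ?_
      have h7 : |u / c| ≤ 1 := by
        rw [abs_div, abs_of_pos hc, div_le_one hc, abs_of_pos hpos]
        exact le_of_lt (by rwa [abs_of_pos hpos] at hlt)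
      rw [hder, phi, if_pos h7, phi', if_pos h7, abs_of_pos hpos]
      norm_num only [Pi.pow_apply]
      have hc0 : c ≠ 0 := hc.ne'
      field_simp
      ring
    · -- u = 0
      subst hzero
      rw [show hder c 0 = 0 by simp [hder]]
      apply hasDerivAt_zero_aux _ abs
      · simp [hfun]
      · exact continuous_abs.continuousAt
      · simp
      · intro v
        have h1 : |hfun c v| = |v| * |v| * phi (v / c) := by
          rw [hfun, abs_mul, abs_mul, abs_abs, abs_of_nonneg (phi_nonneg _)]
        rw [h1, sub_zero]
        calc |v| * |v| * phi (v / c) ≤ |v| * |v| * 1 :=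
              mul_le_mul_of_nonneg_left (phi_le_one _) (by positivity)
          _ = |v| * |v| := by ring
    · -- -c < u < 0
      have h1 : HasDerivAt (fun v : ℝ => v / c) (1/c) u := (hasDerivAt_id u).div_const c
      have h3 : HasDerivAt (fun v : ℝ => 1 - (v/c)^2) (-(2 * (u/c)^1 * (1/c))) u :=
        (h1.pow 2).const_sub 1
      have h4 := h3.pow 4
      have h5 : HasDerivAt (fun v : ℝ => v^2) (2*u) u := by
        simpa using hasDerivAt_pow 2 u
      have h6 := (h5.mul h4).neg
      have hopen : IsOpen (Set.Ioo (-c) (0:ℝ)) := isOpen_Ioo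
      have hmem : u ∈ Set.Ioo (-c) (0:ℝ) := ⟨by rwa [abs_of_neg hneg, neg_lt] at hlt, hneg⟩
      have heq : ∀ᶠ v in 𝓝 u, hfun c v = -(v^2 * (1 - (v/c)^2)^4) := by
        filter_upwards [hopen.mem_nhds hmem] with v hv
        have h7 : |v / c| ≤ 1 := by
          rw [abs_div, abs_of_pos hc, div_le_one hc, abs_of_neg hv.2]
          linarith [hv.1]
        rw [hfun, phi, if_pos h7, abs_of_neg hv.2]; ring
      have := h6.congr_of_eventuallyEq heq
      refine this.congr_deriv ?_
      have h7 : |u / c| ≤ 1 := by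
        rw [abs_div, abs_of_pos hc, div_le_one hc]; exact hlt.le
      rw [hder, phi, if_pos h7, phi', if_pos h7, abs_of_neg hneg]
      norm_num only [Pi.pow_apply]
      have hc0 : c ≠ 0 := hc.ne'
      field_simp
      ring
  · -- |u| = c : boundary point, derivative 0
    rw [hder_boundary c hc u heq]
    rcases abs_eq hc.le |>.mp heq with h | h
    · -- u = c
      rw [h]
      apply hasDerivAt_zero_aux _ (fun v => v^2 * (v + c)^4 * |v - c|^3 / c^8)
      · have : |c / c| = 1 := by rw [div_self hc.ne']; norm_num
        rw [hfun, phi, if_pos this.le, div_self hc.ne']; norm_num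
      · fun_prop
      · simp
      · intro v
        have h8 : |v - c|^3 * |v - c| = (v - c)^4 := by
          have h0 : |v - c|^4 = (v - c)^4 := by
            rw [pow_abs]; exact abs_of_nonneg (by positivity)
          calc |v - c|^3 * |v - c| = |v - c|^4 := by ring
            _ = (v - c)^4 := h0
        have h9 : (1 - (v/c)^2)^4 = (v + c)^4 * (v - c)^4 / c^8 := by
          field_simp; ring
        calc |hfun c v| ≤ v^2 * (1 - (v/c)^2)^4 := hfun_abs_le c v
          _ = v^2 * (v + c)^4 * |v - c|^3 / c^8 * |v - c| := by
              rw [h9, ← h8]; ring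
    · -- u = -c
      rw [h]
      apply hasDerivAt_zero_aux _ (fun v => v^2 * (v - c)^4 * |v + c|^3 / c^8)
      · have : |(-c) / c| = 1 := by rw [neg_div, div_self hc.ne']; norm_num
        rw [hfun, phi, if_pos this.le]
        rw [neg_div, div_self hc.ne']; norm_num
      · fun_prop
      · simp
      · intro v
        have h8 : |v + c|^3 * |v + c| = (v + c)^4 := by
          have h0 : |v + c|^4 = (v + c)^4 := by
            rw [pow_abs]; exact abs_of_nonneg (by positivity)
          calc |v + c|^3 * |v + c| = |v + c|^4 := by ring
            _ = (v + c)^4 := h0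
        have h9 : (1 - (v/c)^2)^4 = (v - c)^4 * (v + c)^4 / c^8 := by
          field_simp; ring
        calc |hfun c v| ≤ v^2 * (1 - (v/c)^2)^4 := hfun_abs_le c v
          _ = v^2 * (v - c)^4 * |v + c|^3 / c^8 * |v + c| := by
              rw [h9, ← h8]; ring
          _ = v^2 * (v - c)^4 * |v + c|^3 / c^8 * |v - -c| := by rw [sub_neg_eq_add]
  · -- c < |u|
    have hopen : IsOpen {v : ℝ | c < |v|} := isOpen_lt continuous_const continuous_abs
    have hmem : u ∈ {v : ℝ | c < |v|} := hgt
    have hz : ∀ v, c < |v| → (1:ℝ) < |v / c| := fun v hv => by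
      rw [abs_div, abs_of_pos hc, lt_div_iff₀ hc]; linarith
    have heq : ∀ᶠ v in 𝓝 u, hfun c v = 0 := by
      filter_upwards [hopen.mem_nhds hmem] with v hv
      rw [hfun, phi_zero_of_gt _ (hz v hv)]; ring
    have := (hasDerivAt_const u (0:ℝ)).congr_of_eventuallyEq heq
    refine this.congr_deriv ?_
    rw [hder, phi_zero_of_gt _ (hz u hgt), phi'_zero_of_gt _ (hz u hgt)]
    ring

lemma contDiff_hfun (c : ℝ) (hc : 0 < c) : ContDiff ℝ 1 (hfun c) := by
  rw [contDiff_one_iff_deriv]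
  refine ⟨fun u => (hasDerivAt_hfun c hc u).differentiableAt, ?_⟩
  have hd : deriv (hfun c) = hder c := funext fun u => (hasDerivAt_hfun c hc u).deriv
  rw [hd]
  unfold hder
  exact ((continuous_const.mul continuous_abs).mul
      (continuous_phi.comp (continuous_id.div_const c))).add
    (((continuous_id.mul continuous_abs).mul
      (continuous_phi'.comp (continuous_id.div_const c))).div_const c)

lemma contDiff_gmap (c : ℝ) (hc : 0 < c) (α : ℝ → ℝ) (hα : ContDiff ℝ 2 α) :
    ContDiff ℝ 1 (gmap c α) := by
  have hproj : ∀ i, ContDiff ℝ 1 (fun y : E2 => y i) :=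
    fun i => contDiff_euclidean.mp contDiff_id i
  rw [contDiff_euclidean]
  intro i
  fin_cases i
  · show ContDiff ℝ 1 fun y : E2 => gmap c α y 0
    have hrw : (fun y : E2 => gmap c α y 0) =
        fun y : E2 => y 0 + 2 * hfun c (y 0) * α (y 1) := by
      funext y
      have h1 : gmap c α y 0 = y 0 + 2 * (y 0)^2 * sgn (y 0) * phi (y 0 / c) * α (y 1) := by
        simp [gmap, vec2]
      rw [h1, hfun, ← sq_sgn]
      ring
    rw [hrw]
    exact (hproj 0).add ((contDiff_const.mul ((contDiff_hfun c hc).comp (hproj 0))).mul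
      ((hα.of_le (by norm_num)).comp (hproj 1)))
  · show ContDiff ℝ 1 fun y : E2 => gmap c α y 1
    have hrw : (fun y : E2 => gmap c α y 1) = fun y : E2 => y 1 := by
      funext y; simp [gmap, vec2]
    rw [hrw]
    exact hproj 1

/-- For `c > 0` and `α` twice continuously differentiable, `g = S ∘ G ∘ τ`, and
`g` is continuously differentiable on `ℝ²`. -/
theorem stmt_13 (c : ℝ) (hc : 0 < c) (α : ℝ → ℝ) (hα : ContDiff ℝ 2 α) :
    (∀ y : E2, gmap c α y = Smap (Gmap c α (tau y))) ∧
    ContDiff ℝ 1 (gmap c α) := by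
  have hs2 : (0:ℝ) < Real.sqrt 2 := Real.sqrt_pos.2 (by norm_num)
  have h2 : Real.sqrt 2 * Real.sqrt 2 = 2 := Real.mul_self_sqrt (by norm_num)
  refine ⟨fun y => ?_, contDiff_gmap c hc α hα⟩
  set a := y 0 with ha
  set b := y 1 with hb
  have hA : tau y 0 = a / Real.sqrt 2 + b := by simp [tau, vec2, ha, hb]
  have hB : tau y 1 = -a / Real.sqrt 2 + b := by simp [tau, vec2, ha, hb]
  have hdiff : tau y 0 - tau y 1 = Real.sqrt 2 * a := by
    rw [hA, hB]
    have hr : a / Real.sqrt 2 + b - (-a / Real.sqrt 2 + b) = 2 * a / Real.sqrt 2 := by ring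
    rw [hr, div_eq_iff hs2.ne']
    linear_combination (-a) * h2
  have hsum : tau y 0 + tau y 1 = 2 * b := by rw [hA, hB]; ring
  have hsgn : sgn (tau y 0 - tau y 1) = sgn a := by
    rw [hdiff]; exact sgn_smul _ _ hs2
  have hphiT : phiT c α (tau y) = phi (a / c) * α b := by
    unfold phiT
    rw [hdiff, hsum, mul_div_mul_left _ _ hs2.ne']
    norm_num
  set s := (1 / Real.sqrt 2) * (tau y 0 - tau y 1)^2 * sgn (tau y 0 - tau y 1) *
    phiT c α (tau y) with hs
  have hG0 : Gmap c α (tau y) 0 = tau y 0 + s * 1 := by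
    simp [Gmap, vec2, hs]
  have hG1 : Gmap c α (tau y) 1 = tau y 1 + s * (-1) := by
    simp [Gmap, vec2, hs]
  have hsval : s = Real.sqrt 2 * a^2 * sgn a * (phi (a / c) * α b) := by
    rw [hs, hsgn, hphiT, hdiff]
    field_simp
  ext i
  fin_cases i
  · show gmap c α y 0 = Smap (Gmap c α (tau y)) 0
    have hL : gmap c α y 0 = a + 2 * a^2 * sgn a * phi (a/c) * α b := by
      simp [gmap, vec2, ha, hb]
    have hR : Smap (Gmap c α (tau y)) 0 = (Gmap c α (tau y) 0 - Gmap c α (tau y) 1) / Real.sqrt 2 := by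
      simp [Smap, vec2]
    rw [hL, hR, hG0, hG1, hsval, hA, hB]
    field_simp
    ring_nf
    all_goals rw [Real.sq_sqrt (by norm_num : (0:ℝ) ≤ 2)]
    all_goals ring
  · show gmap c α y 1 = Smap (Gmap c α (tau y)) 1
    have hL : gmap c α y 1 = b := by simp [gmap, vec2, ha, hb]
    have hR : Smap (Gmap c α (tau y)) 1 = (Gmap c α (tau y) 0 + Gmap c α (tau y) 1) / 2 := by
      simp [Smap, vec2]
    rw [hL, hR, hG0, hG1, hA, hB]
    ring
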